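/- Let A (n×n), B (n×m), C (p×n), K̄, K̲ (m×n), L̄, L̲ (n×p), E (n×q) with E ≥ 0 entrywise, and F (p×r) be real matrices. Let G = [[A + B(K̄ + K̲), BK̄, −BK̲], [0, A − L̄C, 0], [0, 0, A − L̲C]], let 𝟙 denote all-ones vectors of appropriate dimension, let d = (E𝟙, L̄F𝟙 − E𝟙, E𝟙 − L̲F𝟙) ∈ ℝ^{3n}, and let f : ℝ^{3n} → ℝ^{3n} be f(z) = Gz + d. Let X_e = {(x, ē, e̲) ∈ ℝ^{3n} : x ≥ 0, ē ≥ 0, 0 ≤ e̲ ≤ x}. Then the following are equivalent: (i) A + B(K̄ + K̲), A − L̄C, and A − L̲C are Schur stable, the six inequalities A + B(K̄ + K̲) ≥ 0, A + BK̄ ≥ 0, BK̄ ≥ 0, A − L̄C ≥ 0, A − L̲C ≥ 0, BK̄ + L̲C ≥ 0 hold, and L̄F𝟙 − E𝟙 ≥ 0, E𝟙 − L̲F𝟙 ≥ 0, L̲F𝟙 ≥ 0; (ii) X_e is invariant under f and there exists X* ∈ X_e such that for every z₀ ∈ X_e the iterates f^t(z₀) converge to X* as t → ∞. -/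

import Mathlib

open Matrix Filter

/-- A real square matrix is Schur stable if its spectral radius (computed over ℂ) is
strictly less than one. -/
def IsSchur {ι : Type*} [Fintype ι] [DecidableEq ι] (M : Matrix ι ι ℝ) : Prop :=
  spectralRadius ℂ (M.map (algebraMap ℝ ℂ)) < 1

/-- The error-coordinate closed-loop map `(x, ē, e̲) ↦ G (x, ē, e̲)` with
`G = [[A + B(K̄ + K̲), BK̄, −BK̲], [0, A − L̄C, 0], [0, 0, A − L̲C]]`. -/
def Gmap {n m p : ℕ}
    (A : Matrix (Fin n) (Fin n) ℝ) (B : Matrix (Fin n) (Fin m) ℝ)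
    (C : Matrix (Fin p) (Fin n) ℝ)
    (Ku Kl : Matrix (Fin m) (Fin n) ℝ) (Lu Ll : Matrix (Fin n) (Fin p) ℝ)
    (z : (Fin n → ℝ) × (Fin n → ℝ) × (Fin n → ℝ)) :
    (Fin n → ℝ) × (Fin n → ℝ) × (Fin n → ℝ) :=
  ((A + B * (Ku + Kl)) *ᵥ z.1 + (B * Ku) *ᵥ z.2.1 - (B * Kl) *ᵥ z.2.2,
   (A - Lu * C) *ᵥ z.2.1,
   (A - Ll * C) *ᵥ z.2.2)

/-- The constant term `d = (E𝟙, L̄F𝟙 − E𝟙, E𝟙 − L̲F𝟙)` of the expected error dynamics. -/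
def noiseOffset {n p q r : ℕ}
    (Lu Ll : Matrix (Fin n) (Fin p) ℝ)
    (E : Matrix (Fin n) (Fin q) ℝ) (F : Matrix (Fin p) (Fin r) ℝ) :
    (Fin n → ℝ) × (Fin n → ℝ) × (Fin n → ℝ) :=
  (E *ᵥ (fun _ => (1 : ℝ)),
   (Lu * F) *ᵥ (fun _ => (1 : ℝ)) - E *ᵥ (fun _ => (1 : ℝ)),
   E *ᵥ (fun _ => (1 : ℝ)) - (Ll * F) *ᵥ (fun _ => (1 : ℝ)))

/-- The affine expected error dynamics `f(z) = Gz + d`. -/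
def noisyMap {n m p q r : ℕ}
    (A : Matrix (Fin n) (Fin n) ℝ) (B : Matrix (Fin n) (Fin m) ℝ)
    (C : Matrix (Fin p) (Fin n) ℝ)
    (Ku Kl : Matrix (Fin m) (Fin n) ℝ) (Lu Ll : Matrix (Fin n) (Fin p) ℝ)
    (E : Matrix (Fin n) (Fin q) ℝ) (F : Matrix (Fin p) (Fin r) ℝ)
    (z : (Fin n → ℝ) × (Fin n → ℝ) × (Fin n → ℝ)) :
    (Fin n → ℝ) × (Fin n → ℝ) × (Fin n → ℝ) :=
  Gmap A B C Ku Kl Lu Ll z + noiseOffset Lu Ll E F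

/-- The error cone `X_e = {(x, ē, e̲) : x ≥ 0, ē ≥ 0, 0 ≤ e̲ ≤ x entrywise}`. -/
def errorCone (n : ℕ) : Set ((Fin n → ℝ) × (Fin n → ℝ) × (Fin n → ℝ)) :=
  {z | (∀ i, 0 ≤ z.1 i) ∧ (∀ i, 0 ≤ z.2.1 i) ∧ (∀ i, 0 ≤ z.2.2 i) ∧
       (∀ i, z.2.2 i ≤ z.1 i)}


/-!
In the coordinates `(x - e̲, ē, e̲)` the cone `X_e` becomes the nonnegative orthant, and `f`
becomes an affine map whose linear part has the blocks `A + B(K̄ + K̲)`, `BK̄`, `BK̄ + L̲C`,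
`A - L̄C`, `A - L̲C` and whose constant part is `(L̲F𝟙, L̄F𝟙 - E𝟙, E𝟙 - L̲F𝟙)`. Hence `X_e` is
invariant exactly when all of these are entrywise nonnegative; `A + BK̄` is the sum of two of
them.

For the dynamics, `f^t z - f^t z' = G^t (z - z')` and `X_e - X_e` is the whole space, so all
orbits starting in `X_e` converge to one point iff `G^t → 0`, i.e. iff `ρ(G) < 1` (Gelfand's
formula). As `G` is block upper triangular, its spectrum is the union of the spectra of its
diagonal blocks. The common limit is the fixed point `(1 - G)⁻¹ d`, which lies in `X_e` because
`X_e` is closed and invariant.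
-/

open Topology
open scoped ENNReal

section BanachAlgebra

variable {A : Type*} [NormedRing A] [NormedAlgebra ℂ A] [CompleteSpace A] {a : A}

theorem tendsto_pow_of_spectralRadius_lt_one (h : spectralRadius ℂ a < 1) :
    Tendsto (a ^ ·) atTop (𝓝 0) := by
  obtain ⟨θ, hρθ, hθ⟩ := ENNReal.lt_iff_exists_nnreal_btwn.mp h
  have hθ₁ : (θ : ℝ) < 1 := by exact_mod_cast hθ
  have hdecay : ∀ᶠ t : ℕ in atTop, ‖a ^ t‖ ≤ θ ^ t := by
    have hgelfand := spectrum.pow_nnnorm_pow_one_div_tendsto_nhds_spectralRadius a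
    filter_upwards [hgelfand.eventually_lt_const hρθ, eventually_ge_atTop 1] with t ht ht₁
    rw [one_div, ENNReal.rpow_inv_lt_iff (by positivity), ENNReal.rpow_natCast] at ht
    exact_mod_cast ht.le
  exact squeeze_zero_norm' hdecay (tendsto_pow_atTop_nhds_zero_of_lt_one θ.coe_nonneg hθ₁)

theorem spectralRadius_lt_one_of_tendsto_pow [NormOneClass A]
    (h : Tendsto (a ^ ·) atTop (𝓝 0)) : spectralRadius ℂ a < 1 := by
  obtain ⟨N, hN, hN₁⟩ := ((h.norm.eventually_lt_const (by norm_num : ‖(0 : A)‖ < 1)).and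
    (eventually_ge_atTop 1)).exists
  by_contra! hρ
  have := calc (1 : ℝ≥0∞) ≤ spectralRadius ℂ a ^ N := one_le_pow₀ hρ
    _ ≤ spectralRadius ℂ (a ^ N) := spectrum.spectralRadius_pow_le a N (by omega)
    _ ≤ ‖a ^ N‖₊ := spectrum.spectralRadius_le_nnnorm _
  have : (1 : ℝ) ≤ ‖a ^ N‖ := by exact_mod_cast this
  linarith

end BanachAlgebra

namespace Matrix

variable {ι κ R : Type*} [Fintype κ]

theorem spectrum_fromBlocks_zero₂₁ [Fintype ι] [DecidableEq ι] [DecidableEq κ] [Field R]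
    (A : Matrix ι ι R) (B : Matrix ι κ R) (D : Matrix κ κ R) :
    spectrum R (fromBlocks A B 0 D) = spectrum R A ∪ spectrum R D := by
  ext z
  simp [mem_spectrum_iff_isRoot_charpoly, charpoly_fromBlocks_zero₂₁]

theorem tendsto_nhds_zero_iff_forall_mulVec [DecidableEq κ] [Semiring R] [TopologicalSpace R]
    [IsTopologicalSemiring R] {α : Type*} {l : Filter α} {N : α → Matrix ι κ R} :
    Tendsto N l (𝓝 0) ↔ ∀ v, Tendsto (N · *ᵥ v) l (𝓝 0) := by
  refine ⟨fun h v => ?_, fun h => ?_⟩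
  · have hcont : Continuous (· *ᵥ v : Matrix ι κ R → ι → R) :=
      continuous_id.matrix_mulVec continuous_const
    simpa [Function.comp_def] using (hcont.tendsto 0).comp h
  refine tendsto_pi_nhds.2 fun i => tendsto_pi_nhds.2 fun j => ?_
  simpa [mulVec_single_one] using tendsto_pi_nhds.1 (h (Pi.single j 1)) i

theorem mulVec_nonneg [Semiring R] [PartialOrder R] [IsOrderedRing R] {M : Matrix ι κ R}
    {v : κ → R} (hM : ∀ i j, 0 ≤ M i j) (hv : 0 ≤ v) : 0 ≤ M *ᵥ v :=
  fun i => Finset.sum_nonneg fun j _ => mul_nonneg (hM i j) (hv j)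

theorem nonneg_of_forall_nonneg_mulVec_add [DecidableEq κ] [Field R] [LinearOrder R]
    [IsStrictOrderedRing R] {M : Matrix ι κ R} {c : ι → R}
    (h : ∀ v, 0 ≤ v → 0 ≤ M *ᵥ v + c) (i : ι) (j : κ) : 0 ≤ M i j := by
  by_contra! hneg
  set t := (|c i| + 1) / -M i j
  have ht : 0 ≤ t := div_nonneg (by positivity) (by linarith)
  have hMt : M i j * t = -(|c i| + 1) := by
    simp only [t]
    field_simp [hneg.ne]
  have := h (Pi.single j t) (Pi.single_nonneg.2 ht) i
  simp only [Pi.zero_apply, Pi.add_apply, mulVec_single, Pi.smul_apply, col_apply,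
    MulOpposite.smul_eq_mul_unop, MulOpposite.unop_op] at this
  linarith [le_abs_self (c i)]

end Matrix

section IsSchur

variable {ι : Type*} [Fintype ι] [DecidableEq ι]

theorem isSchur_iff_tendsto_pow {M : Matrix ι ι ℝ} :
    IsSchur M ↔ Tendsto (M ^ ·) atTop (𝓝 0) := by
  have hcomplex : Tendsto (M ^ ·) atTop (𝓝 0) ↔
      Tendsto (M.map (algebraMap ℝ ℂ) ^ ·) atTop (𝓝 0) := by
    simp only [← Matrix.map_pow]
    rw [Complex.isometry_ofReal.isEmbedding.matrix_map.tendsto_nhds_iff]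
    simp [Function.comp_def]
  rw [IsSchur, hcomplex]
  let _ := Matrix.linftyOpNormedRing (n := ι) (α := ℂ)
  let _ := Matrix.linftyOpNormedAlgebra (R := ℂ) (n := ι) (α := ℂ)
  rcases isEmpty_or_nonempty ι with hι | hι
  · simp [spectrum.SpectralRadius.of_subsingleton, Subsingleton.elim _ (0 : Matrix ι ι ℂ)]
  · exact ⟨tendsto_pow_of_spectralRadius_lt_one, spectralRadius_lt_one_of_tendsto_pow⟩

theorem isSchur_iff_forall_tendsto_pow_mulVec {M : Matrix ι ι ℝ} :
    IsSchur M ↔ ∀ v, Tendsto (M ^ · *ᵥ v) atTop (𝓝 0) := by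
  rw [isSchur_iff_tendsto_pow, tendsto_nhds_zero_iff_forall_mulVec]

theorem IsSchur.isUnit_one_sub {M : Matrix ι ι ℝ} (hM : IsSchur M) : IsUnit (1 - M) := by
  have hker : ∀ u, (1 - M) *ᵥ u = 0 → u = 0 := fun u hu => by
    have hfix : M *ᵥ u = u := by
      rw [sub_mulVec, one_mulVec, sub_eq_zero] at hu
      exact hu.symm
    have hpow (t : ℕ) : M ^ t *ᵥ u = u := by
      induction t with
      | zero => simp
      | succ t ih => rw [pow_succ, ← mulVec_mulVec, hfix, ih]
    exact tendsto_nhds_unique (tendsto_const_nhds.congr fun t => (hpow t).symm)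
      (isSchur_iff_forall_tendsto_pow_mulVec.1 hM u)
  refine mulVec_injective_iff_isUnit.1 fun v w hvw => sub_eq_zero.1 (hker _ ?_)
  rw [mulVec_sub, sub_eq_zero]
  exact hvw

theorem isSchur_fromBlocks_zero₂₁_iff {κ : Type*} [Fintype κ] [DecidableEq κ]
    {A : Matrix ι ι ℝ} {B : Matrix ι κ ℝ} {D : Matrix κ κ ℝ} :
    IsSchur (fromBlocks A B 0 D) ↔ IsSchur A ∧ IsSchur D := by
  rw [IsSchur, fromBlocks_map, Matrix.map_zero _ (map_zero _), spectralRadius,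
    spectrum_fromBlocks_zero₂₁, iSup_union]
  exact sup_lt_iff

end IsSchur

section AffineDynamics

variable {V ι : Type*} [AddCommGroup V] [Module ℝ V] [TopologicalSpace V]
  [Fintype ι] [DecidableEq ι] (e : V ≃L[ℝ] (ι → ℝ)) {G : Matrix ι ι ℝ} {c : ι → ℝ} {f : V → V}

theorem map_iterate_sub_iterate (hf : ∀ z, e (f z) = G *ᵥ e z + c) (t : ℕ) (z z' : V) :
    e (f^[t] z - f^[t] z') = G ^ t *ᵥ e (z - z') := by
  induction t with
  | zero => simp
  | succ t ih =>
    rw [Function.iterate_succ_apply', Function.iterate_succ_apply', map_sub, hf, hf,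
      add_sub_add_right_eq_sub, ← mulVec_sub, ← map_sub, ih, mulVec_mulVec, pow_succ']

theorem IsSchur.exists_tendsto_iterate (hG : IsSchur G) (hf : ∀ z, e (f z) = G *ᵥ e z + c) :
    ∃ X, ∀ z, Tendsto (f^[·] z) atTop (𝓝 X) := by
  obtain ⟨Y, hY⟩ := mulVec_surjective_iff_isUnit.2 hG.isUnit_one_sub c
  have hfix : Function.IsFixedPt f (e.symm Y) := e.injective <| by
    rw [hf, e.apply_symm_apply, ← hY, sub_mulVec, one_mulVec]
    abel
  refine ⟨e.symm Y, fun z => ?_⟩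
  rw [e.toHomeomorph.isInducing.tendsto_nhds_iff]
  have hiter (t : ℕ) : e (f^[t] z) = G ^ t *ᵥ e (z - e.symm Y) + Y := by
    rw [← map_iterate_sub_iterate e hf, (hfix.iterate t).eq, map_sub, e.apply_symm_apply,
      sub_add_cancel]
  simpa [Function.comp_def, hiter] using
    (isSchur_iff_forall_tendsto_pow_mulVec.1 hG (e (z - e.symm Y))).add_const Y

theorem isSchur_of_tendsto_iterate (hf : ∀ z, e (f z) = G *ᵥ e z + c) {S : Set V}
    (hS : ∀ w, ∃ z ∈ S, ∃ z' ∈ S, z - z' = w) {X : V}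
    (hX : ∀ z ∈ S, Tendsto (f^[·] z) atTop (𝓝 X)) : IsSchur G := by
  refine isSchur_iff_forall_tendsto_pow_mulVec.2 fun v => ?_
  obtain ⟨z, hz, z', hz', hzz'⟩ := hS (e.symm v)
  have hlim (y : V) (hy : y ∈ S) : Tendsto (fun t => e (f^[t] y)) atTop (𝓝 (e X)) :=
    (e.continuous.tendsto X).comp (hX y hy)
  simpa [← map_sub, map_iterate_sub_iterate e hf, hzz'] using (hlim z hz).sub (hlim z' hz')

end AffineDynamics

section ErrorCone

variable {n : ℕ}

theorem isClosed_errorCone (n : ℕ) : IsClosed (errorCone n) :=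
  (isClosed_le continuous_const continuous_fst).inter <|
    (isClosed_le continuous_const (continuous_fst.comp continuous_snd)).inter <|
      (isClosed_le continuous_const (continuous_snd.comp continuous_snd)).inter <|
        isClosed_le (continuous_snd.comp continuous_snd) continuous_fst

theorem mk_add_mem_errorCone_iff (u v w : Fin n → ℝ) :
    (u + w, v, w) ∈ errorCone n ↔ 0 ≤ u ∧ 0 ≤ v ∧ 0 ≤ w := by
  refine ⟨fun ⟨_, hv, hw, hwu⟩ => ⟨fun i => ?_, hv, hw⟩,
    fun ⟨hu, hv, hw⟩ => ⟨add_nonneg hu hw, hv, hw, le_add_of_nonneg_left hu⟩⟩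
  simpa using hwu i

theorem exists_mem_errorCone_sub_eq (w : (Fin n → ℝ) × (Fin n → ℝ) × (Fin n → ℝ)) :
    ∃ z ∈ errorCone n, ∃ z' ∈ errorCone n, z - z' = w := by
  obtain ⟨x, a, b⟩ := w
  refine ⟨((x - b)⁺ + b⁺, a⁺, b⁺),
    (mk_add_mem_errorCone_iff ..).2 ⟨posPart_nonneg _, posPart_nonneg _, posPart_nonneg _⟩,
    ((x - b)⁻ + b⁻, a⁻, b⁻),
    (mk_add_mem_errorCone_iff ..).2 ⟨negPart_nonneg _, negPart_nonneg _, negPart_nonneg _⟩, ?_⟩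
  simp only [Prod.mk_sub_mk, add_sub_add_comm, posPart_sub_negPart, sub_add_cancel]

theorem mapsTo_errorCone_iff {f : (Fin n → ℝ) × (Fin n → ℝ) × (Fin n → ℝ) →
      (Fin n → ℝ) × (Fin n → ℝ) × (Fin n → ℝ)} :
    Set.MapsTo f (errorCone n) (errorCone n) ↔
      ∀ u v w, 0 ≤ u → 0 ≤ v → 0 ≤ w → f (u + w, v, w) ∈ errorCone n := by
  refine ⟨fun h u v w hu hv hw => h ((mk_add_mem_errorCone_iff u v w).2 ⟨hu, hv, hw⟩), ?_⟩
  rintro h ⟨x, v, w⟩ hz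
  obtain ⟨hu, hv, hw⟩ := (mk_add_mem_errorCone_iff (x - w) v w).1 (by rwa [sub_add_cancel])
  simpa using h _ _ _ hu hv hw

end ErrorCone

def stackEquiv (ι : Type*) : ((ι → ℝ) × (ι → ℝ) × (ι → ℝ)) ≃L[ℝ] (ι ⊕ ι ⊕ ι → ℝ) :=
  ((ContinuousLinearEquiv.refl ℝ (ι → ℝ)).prodCongr
    (ContinuousLinearEquiv.sumPiEquivProdPi ℝ ι ι fun _ => ℝ).symm).trans
    (ContinuousLinearEquiv.sumPiEquivProdPi ℝ ι (ι ⊕ ι) fun _ => ℝ).symm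

theorem stackEquiv_apply {ι : Type*} (z : (ι → ℝ) × (ι → ℝ) × (ι → ℝ)) :
    stackEquiv ι z = Sum.elim z.1 (Sum.elim z.2.1 z.2.2) := rfl

local notation "𝟙" => fun _ => (1 : ℝ)

section NoisyObserver

variable {n m p q r : ℕ}
  (A : Matrix (Fin n) (Fin n) ℝ) (B : Matrix (Fin n) (Fin m) ℝ) (C : Matrix (Fin p) (Fin n) ℝ)
  (Ku Kl : Matrix (Fin m) (Fin n) ℝ) (Lu Ll : Matrix (Fin n) (Fin p) ℝ)
  (E : Matrix (Fin n) (Fin q) ℝ) (F : Matrix (Fin p) (Fin r) ℝ)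

def closedLoopMatrix : Matrix (Fin n ⊕ Fin n ⊕ Fin n) (Fin n ⊕ Fin n ⊕ Fin n) ℝ :=
  fromBlocks (A + B * (Ku + Kl)) (fromCols (B * Ku) (-(B * Kl))) 0
    (fromBlocks (A - Lu * C) 0 0 (A - Ll * C))

theorem stackEquiv_noisyMap (z : (Fin n → ℝ) × (Fin n → ℝ) × (Fin n → ℝ)) :
    stackEquiv _ (noisyMap A B C Ku Kl Lu Ll E F z) =
      closedLoopMatrix A B C Ku Kl Lu Ll *ᵥ stackEquiv _ z +
        stackEquiv _ (noiseOffset Lu Ll E F) := by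
  ext (i | i | i) <;>
    simp [noisyMap, Gmap, stackEquiv_apply, closedLoopMatrix, fromBlocks_mulVec, sub_eq_add_neg,
      neg_mulVec, add_assoc]

theorem isSchur_closedLoopMatrix_iff :
    IsSchur (closedLoopMatrix A B C Ku Kl Lu Ll) ↔
      IsSchur (A + B * (Ku + Kl)) ∧ IsSchur (A - Lu * C) ∧ IsSchur (A - Ll * C) := by
  rw [closedLoopMatrix, isSchur_fromBlocks_zero₂₁_iff, isSchur_fromBlocks_zero₂₁_iff]

theorem noisyMap_mk_add (u v w : Fin n → ℝ) :
    noisyMap A B C Ku Kl Lu Ll E F (u + w, v, w) =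
      (((A + B * (Ku + Kl)) *ᵥ u + (B * Ku) *ᵥ v + (B * Ku + Ll * C) *ᵥ w + (Ll * F) *ᵥ 𝟙) +
          ((A - Ll * C) *ᵥ w + (E *ᵥ 𝟙 - (Ll * F) *ᵥ 𝟙)),
        (A - Lu * C) *ᵥ v + ((Lu * F) *ᵥ 𝟙 - E *ᵥ 𝟙),
        (A - Ll * C) *ᵥ w + (E *ᵥ 𝟙 - (Ll * F) *ᵥ 𝟙)) := by
  simp only [noisyMap, Gmap, noiseOffset, Prod.mk_add_mk, Prod.mk.injEq, and_true]
  simp only [mulVec_add, add_mulVec, sub_mulVec, Matrix.mul_add]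
  abel

theorem mapsTo_noisyMap_errorCone_iff :
    Set.MapsTo (noisyMap A B C Ku Kl Lu Ll E F) (errorCone n) (errorCone n) ↔
      (∀ i j, 0 ≤ (A + B * (Ku + Kl)) i j) ∧ (∀ i j, 0 ≤ (A + B * Ku) i j) ∧
      (∀ i j, 0 ≤ (B * Ku) i j) ∧ (∀ i j, 0 ≤ (A - Lu * C) i j) ∧
      (∀ i j, 0 ≤ (A - Ll * C) i j) ∧ (∀ i j, 0 ≤ (B * Ku + Ll * C) i j) ∧
      (∀ i, 0 ≤ ((Lu * F) *ᵥ 𝟙 - E *ᵥ 𝟙) i) ∧ (∀ i, 0 ≤ (E *ᵥ 𝟙 - (Ll * F) *ᵥ 𝟙) i) ∧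
      (∀ i, 0 ≤ ((Ll * F) *ᵥ 𝟙) i) := by
  simp only [mapsTo_errorCone_iff, noisyMap_mk_add, mk_add_mem_errorCone_iff]
  constructor
  · intro h
    obtain ⟨hLF, hd₂, hd₃⟩ := by
      simpa only [mulVec_zero, zero_add] using h 0 0 0 le_rfl le_rfl le_rfl
    have hM₁ := nonneg_of_forall_nonneg_mulVec_add (c := (Ll * F) *ᵥ 𝟙) fun u hu => by
      simpa using (h u 0 0 hu le_rfl le_rfl).1
    have hP := nonneg_of_forall_nonneg_mulVec_add (c := (Ll * F) *ᵥ 𝟙) fun v hv => by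
      simpa using (h 0 v 0 le_rfl hv le_rfl).1
    have hPL := nonneg_of_forall_nonneg_mulVec_add (c := (Ll * F) *ᵥ 𝟙) fun w hw => by
      simpa using (h 0 0 w le_rfl le_rfl hw).1
    have hM₂ := nonneg_of_forall_nonneg_mulVec_add (c := (Lu * F) *ᵥ 𝟙 - E *ᵥ 𝟙) fun v hv =>
      (h 0 v 0 le_rfl hv le_rfl).2.1
    have hM₃ := nonneg_of_forall_nonneg_mulVec_add (c := E *ᵥ 𝟙 - (Ll * F) *ᵥ 𝟙) fun w hw =>
      (h 0 0 w le_rfl le_rfl hw).2.2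
    have hAP : A + B * Ku = (B * Ku + Ll * C) + (A - Ll * C) := by abel
    exact ⟨hM₁, fun i j => by rw [hAP]; exact add_nonneg (hPL i j) (hM₃ i j), hP, hM₂, hM₃,
      hPL, hd₂, hd₃, hLF⟩
  · rintro ⟨hM₁, -, hP, hM₂, hM₃, hPL, hd₂, hd₃, hLF⟩ u v w hu hv hw
    exact ⟨add_nonneg (add_nonneg (add_nonneg (mulVec_nonneg hM₁ hu) (mulVec_nonneg hP hv))
      (mulVec_nonneg hPL hw)) hLF, add_nonneg (mulVec_nonneg hM₂ hv) hd₂,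
      add_nonneg (mulVec_nonneg hM₃ hw) hd₃⟩

theorem exists_tendsto_iterate_noisyMap_iff
    (hinv : Set.MapsTo (noisyMap A B C Ku Kl Lu Ll E F) (errorCone n) (errorCone n)) :
    (∃ Xstar ∈ errorCone n, ∀ z₀ ∈ errorCone n,
        Tendsto (fun t => (noisyMap A B C Ku Kl Lu Ll E F)^[t] z₀) atTop (𝓝 Xstar)) ↔
      IsSchur (A + B * (Ku + Kl)) ∧ IsSchur (A - Lu * C) ∧ IsSchur (A - Ll * C) := by
  have hf := stackEquiv_noisyMap A B C Ku Kl Lu Ll E F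
  rw [← isSchur_closedLoopMatrix_iff]
  constructor
  · rintro ⟨X, -, hX⟩
    exact isSchur_of_tendsto_iterate _ hf exists_mem_errorCone_sub_eq hX
  · intro hG
    obtain ⟨X, hX⟩ := hG.exists_tendsto_iterate _ hf
    have hzero : (0 : (Fin n → ℝ) × (Fin n → ℝ) × (Fin n → ℝ)) ∈ errorCone n :=
      ⟨fun _ => le_rfl, fun _ => le_rfl, fun _ => le_rfl, fun _ => le_rfl⟩
    exact ⟨X, (isClosed_errorCone n).mem_of_tendsto (hX 0)
      (Eventually.of_forall fun t => hinv.iterate t hzero), fun z _ => hX z⟩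

end NoisyObserver

theorem noisy_positive_observer_iff_general {n m p q r : ℕ}
    (A : Matrix (Fin n) (Fin n) ℝ) (B : Matrix (Fin n) (Fin m) ℝ)
    (C : Matrix (Fin p) (Fin n) ℝ)
    (Ku Kl : Matrix (Fin m) (Fin n) ℝ) (Lu Ll : Matrix (Fin n) (Fin p) ℝ)
    (E : Matrix (Fin n) (Fin q) ℝ) (F : Matrix (Fin p) (Fin r) ℝ) :
    (IsSchur (A + B * (Ku + Kl)) ∧ IsSchur (A - Lu * C) ∧ IsSchur (A - Ll * C) ∧
     (∀ i j, 0 ≤ (A + B * (Ku + Kl)) i j) ∧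
     (∀ i j, 0 ≤ (A + B * Ku) i j) ∧
     (∀ i j, 0 ≤ (B * Ku) i j) ∧
     (∀ i j, 0 ≤ (A - Lu * C) i j) ∧
     (∀ i j, 0 ≤ (A - Ll * C) i j) ∧
     (∀ i j, 0 ≤ (B * Ku + Ll * C) i j) ∧
     (∀ i, 0 ≤ ((Lu * F) *ᵥ (fun _ => (1 : ℝ)) - E *ᵥ (fun _ => (1 : ℝ))) i) ∧
     (∀ i, 0 ≤ (E *ᵥ (fun _ => (1 : ℝ)) - (Ll * F) *ᵥ (fun _ => (1 : ℝ))) i) ∧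
     (∀ i, 0 ≤ ((Ll * F) *ᵥ (fun _ => (1 : ℝ))) i)) ↔
    ((∀ z ∈ errorCone n, noisyMap A B C Ku Kl Lu Ll E F z ∈ errorCone n) ∧
     ∃ Xstar ∈ errorCone n, ∀ z₀ ∈ errorCone n,
        Tendsto (fun t => (noisyMap A B C Ku Kl Lu Ll E F)^[t] z₀) atTop (nhds Xstar)) := by
  rw [← mapsTo_noisyMap_errorCone_iff]
  constructor
  · rintro ⟨h₁, h₂, h₃, hinv⟩
    exact ⟨fun z hz => hinv hz,
      (exists_tendsto_iterate_noisyMap_iff A B C Ku Kl Lu Ll E F hinv).2 ⟨h₁, h₂, h₃⟩⟩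
  · rintro ⟨hinv, hconv⟩
    obtain ⟨h₁, h₂, h₃⟩ :=
      (exists_tendsto_iterate_noisyMap_iff A B C Ku Kl Lu Ll E F fun z hz => hinv z hz).1 hconv
    exact ⟨h₁, h₂, h₃, fun z hz => hinv z hz⟩

/-- **Theorem 2.** For the expected error dynamics `f(z) = Gz + d` of the noisy system,
Schur stability of the three diagonal blocks together with the six inequalities of
Lemma 1 and the three noise inequalities is equivalent to invariance of `X_e` under `f`
together with asymptotic convergence of all iterates started in `X_e` to a fixed point
`X* ∈ X_e`. -/
theorem noisy_positive_observer_iff {n m p q r : ℕ}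
    (A : Matrix (Fin n) (Fin n) ℝ) (B : Matrix (Fin n) (Fin m) ℝ)
    (C : Matrix (Fin p) (Fin n) ℝ)
    (Ku Kl : Matrix (Fin m) (Fin n) ℝ) (Lu Ll : Matrix (Fin n) (Fin p) ℝ)
    (E : Matrix (Fin n) (Fin q) ℝ) (F : Matrix (Fin p) (Fin r) ℝ)
    (hE : ∀ i j, 0 ≤ E i j) :
    (IsSchur (A + B * (Ku + Kl)) ∧ IsSchur (A - Lu * C) ∧ IsSchur (A - Ll * C) ∧
     (∀ i j, 0 ≤ (A + B * (Ku + Kl)) i j) ∧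
     (∀ i j, 0 ≤ (A + B * Ku) i j) ∧
     (∀ i j, 0 ≤ (B * Ku) i j) ∧
     (∀ i j, 0 ≤ (A - Lu * C) i j) ∧
     (∀ i j, 0 ≤ (A - Ll * C) i j) ∧
     (∀ i j, 0 ≤ (B * Ku + Ll * C) i j) ∧
     (∀ i, 0 ≤ ((Lu * F) *ᵥ (fun _ => (1 : ℝ)) - E *ᵥ (fun _ => (1 : ℝ))) i) ∧
     (∀ i, 0 ≤ (E *ᵥ (fun _ => (1 : ℝ)) - (Ll * F) *ᵥ (fun _ => (1 : ℝ))) i) ∧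
     (∀ i, 0 ≤ ((Ll * F) *ᵥ (fun _ => (1 : ℝ))) i)) ↔
    ((∀ z ∈ errorCone n, noisyMap A B C Ku Kl Lu Ll E F z ∈ errorCone n) ∧
     ∃ Xstar ∈ errorCone n, ∀ z₀ ∈ errorCone n,
        Tendsto (fun t => (noisyMap A B C Ku Kl Lu Ll E F)^[t] z₀) atTop (nhds Xstar)) :=
  noisy_positive_observer_iff_general A B C Ku Kl Lu Ll E F
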